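/- arXiv:1604.05953 — 7 statements merged into one kernel-verified Lean document; each statement's English description precedes it below -/
import Mathlib

section
/- Let D be a star-shaped set in ℝ^n centered at x*, f : ℝ^n → ℝ^n be C¹ with f(x*) = 0, Y real symmetric, and A(z) = Df(z)^T Y + Y Df(z). If A(z) is negative definite for all z ∈ D, then for every solution x(t) of x' = f(x) and every time t with x(t) ∈ D and x(t) ≠ x*, the derivative d/dt L(x(t)) < 0, where L(x) = (x − x*)^T Y (x − x*). -/
/-!
Put `v = x - x*` and `φ(s) = vᵀ Y f(x* + s v) + f(x* + s v)ᵀ Y v`. Then `φ(0) = 0` since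
`f(x*) = 0`, `φ'(s) = vᵀ A(x* + s v) v < 0` on the segment, and `φ(1) = d/dt L(x(t))`.
-/

open Matrix

variable {ι : Type*} [Fintype ι]

theorem HasDerivAt.dotProduct {u w : ℝ → ι → ℝ} {u' w' : ι → ℝ} {t : ℝ}
    (hu : HasDerivAt u u' t) (hw : HasDerivAt w w' t) :
    HasDerivAt (fun τ => u τ ⬝ᵥ w τ) (u' ⬝ᵥ w t + u t ⬝ᵥ w') t := by
  have hsum := HasDerivAt.fun_sum (u := Finset.univ) fun i _ =>
    (hasDerivAt_pi.mp hu i).fun_mul (hasDerivAt_pi.mp hw i)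
  simpa only [_root_.dotProduct, Finset.sum_add_distrib] using hsum

theorem HasDerivAt.mulVec {m : Type*} [Fintype m] (Y : Matrix m ι ℝ) {w : ℝ → ι → ℝ}
    {w' : ι → ℝ} {t : ℝ} (hw : HasDerivAt w w' t) :
    HasDerivAt (fun τ => Y *ᵥ w τ) (Y *ᵥ w') t :=
  Y.mulVecLin.toContinuousLinearMap.hasFDerivAt.comp_hasDerivAt t hw

theorem HasDerivAt.dotProduct_mulVec_add_dotProduct_mulVec (Y M : Matrix ι ι ℝ) (v : ι → ℝ)
    {g : ℝ → ι → ℝ} {s : ℝ} (hg : HasDerivAt g (M *ᵥ v) s) :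
    HasDerivAt (fun s => v ⬝ᵥ Y *ᵥ g s + g s ⬝ᵥ Y *ᵥ v) (v ⬝ᵥ (Mᵀ * Y + Y * M) *ᵥ v) s := by
  have hv := hasDerivAt_const s v
  refine ((hv.dotProduct (hg.mulVec Y)).fun_add (hg.dotProduct (hv.mulVec Y))).congr_deriv ?_
  simp only [add_mulVec, ← mulVec_mulVec, dotProduct_add, dotProduct_mulVec, vecMul_transpose,
    zero_vecMul, zero_dotProduct, mulVec_zero, dotProduct_zero, zero_add, add_zero]
  exact add_comm _ _

theorem dotProduct_mulVec_add_neg_of_negDef_on_segment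
    {f : (ι → ℝ) → ι → ℝ} {Df : (ι → ℝ) → Matrix ι ι ℝ} {Y : Matrix ι ι ℝ} {xs x : ι → ℝ}
    (hf : ∀ z ∈ segment ℝ xs x, HasFDerivAt f (Df z).mulVecLin.toContinuousLinearMap z)
    (hneg : ∀ z ∈ segment ℝ xs x, ∀ v : ι → ℝ, v ≠ 0 → v ⬝ᵥ ((Df z)ᵀ * Y + Y * Df z) *ᵥ v < 0)
    (hxs : f xs = 0) (hx : x ≠ xs) :
    (x - xs) ⬝ᵥ Y *ᵥ f x + f x ⬝ᵥ Y *ᵥ (x - xs) < 0 := by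
  set v := x - xs
  set γ : ℝ → ι → ℝ := fun s => xs + s • v
  set φ : ℝ → ℝ := fun s => v ⬝ᵥ Y *ᵥ f (γ s) + f (γ s) ⬝ᵥ Y *ᵥ v
  have hγ_mem : ∀ s ∈ Set.Icc (0 : ℝ) 1, γ s ∈ segment ℝ xs x := fun s hs => by
    rw [segment_eq_image']
    exact ⟨s, hs, rfl⟩
  have hφ : ∀ s ∈ Set.Icc (0 : ℝ) 1,
      HasDerivAt φ (v ⬝ᵥ ((Df (γ s))ᵀ * Y + Y * Df (γ s)) *ᵥ v) s := fun s hs => by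
    have hγ : HasDerivAt γ v s := by
      simpa [γ] using ((hasDerivAt_id s).smul_const v).const_add xs
    exact ((hf _ (hγ_mem s hs)).comp_hasDerivAt s hγ).dotProduct_mulVec_add_dotProduct_mulVec Y _ v
  have hanti : StrictAntiOn φ (Set.Icc 0 1) := by
    refine strictAntiOn_of_deriv_neg (convex_Icc 0 1)
      (fun s hs => (hφ s hs).continuousAt.continuousWithinAt) fun s hs => ?_
    rw [interior_Icc] at hs
    rw [(hφ s (Set.Ioo_subset_Icc_self hs)).deriv]
    exact hneg _ (hγ_mem s (Set.Ioo_subset_Icc_self hs)) v (sub_ne_zero.mpr hx)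
  have hφ0 : φ 0 = 0 := by simp [φ, γ, hxs]
  have hφ1 : φ 1 = (x - xs) ⬝ᵥ Y *ᵥ f x + f x ⬝ᵥ Y *ᵥ (x - xs) := by simp [φ, γ, v]
  rw [← hφ1, ← hφ0]
  exact hanti (Set.left_mem_Icc.mpr zero_le_one) (Set.right_mem_Icc.mpr zero_le_one) zero_lt_one

theorem stmt4_general {n : ℕ} (D : Set (Fin n → ℝ)) (xs : Fin n → ℝ)
    (hstar : ∀ x ∈ D, ∀ s ∈ Set.Icc (0:ℝ) 1, xs + s • (x - xs) ∈ D)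
    (f : (Fin n → ℝ) → (Fin n → ℝ))
    (Df : (Fin n → ℝ) → Matrix (Fin n) (Fin n) ℝ)
    (hf : ∀ z, HasFDerivAt f ((Df z).mulVecLin.toContinuousLinearMap) z)
    (hxs : f xs = 0)
    (Y : Matrix (Fin n) (Fin n) ℝ)
    (A : (Fin n → ℝ) → Matrix (Fin n) (Fin n) ℝ)
    (hA : ∀ z, A z = (Df z)ᵀ * Y + Y * Df z)
    (hneg : ∀ z ∈ D, ∀ v : Fin n → ℝ, v ≠ 0 → v ⬝ᵥ (A z).mulVec v < 0)
    (x : ℝ → (Fin n → ℝ)) (hx : ∀ t, HasDerivAt x (f (x t)) t)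
    (t : ℝ) (hxD : x t ∈ D) (hxne : x t ≠ xs) :
    deriv (fun τ => (x τ - xs) ⬝ᵥ Y.mulVec (x τ - xs)) t < 0 := by
  have hseg : segment ℝ xs (x t) ⊆ D := by
    rw [segment_eq_image']
    rintro _ ⟨s, hs, rfl⟩
    exact hstar _ hxD s hs
  have hdx := (hx t).sub_const xs
  rw [(hdx.dotProduct (hdx.mulVec Y)).deriv]
  have horbital := dotProduct_mulVec_add_neg_of_negDef_on_segment (fun z _ => hf z)
    (fun z hz => hA z ▸ hneg z (hseg hz)) hxs hxne
  linarith

/-- If `A(z) = Df(z)ᵀ Y + Y Df(z)` is negative definite on a star-shaped set `D`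
centered at a zero `x*` of `f`, then along any solution of `x' = f(x)`,
`d/dt L(x(t)) < 0` whenever `x(t) ∈ D` and `x(t) ≠ x*`. -/
theorem stmt4 {n : ℕ} (D : Set (Fin n → ℝ)) (xs : Fin n → ℝ)
    (hstar : ∀ x ∈ D, ∀ s ∈ Set.Icc (0:ℝ) 1, xs + s • (x - xs) ∈ D)
    (f : (Fin n → ℝ) → (Fin n → ℝ))
    (Df : (Fin n → ℝ) → Matrix (Fin n) (Fin n) ℝ)
    (hf : ∀ z, HasFDerivAt f ((Df z).mulVecLin.toContinuousLinearMap) z)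
    (hDf : Continuous Df) (hxs : f xs = 0)
    (Y : Matrix (Fin n) (Fin n) ℝ) (hY : Y.IsSymm)
    (A : (Fin n → ℝ) → Matrix (Fin n) (Fin n) ℝ)
    (hA : ∀ z, A z = (Df z)ᵀ * Y + Y * Df z)
    (hneg : ∀ z ∈ D, ∀ v : Fin n → ℝ, v ≠ 0 → v ⬝ᵥ (A z).mulVec v < 0)
    (x : ℝ → (Fin n → ℝ)) (hx : ∀ t, HasDerivAt x (f (x t)) t)
    (t : ℝ) (hxD : x t ∈ D) (hxne : x t ≠ xs) :
    deriv (fun τ => (x τ - xs) ⬝ᵥ Y.mulVec (x τ - xs)) t < 0 :=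
  stmt4_general D xs hstar f Df hf hxs Y A hA hneg x hx t hxD hxne
end

section
/- Under the hypotheses of the previous statement (A(z) = Df(z)^T Y + Y Df(z) negative definite for all z in a star-shaped set D centered at x*, with f(x*) = 0), x* is the unique zero of f in D. -/
open Matrix Set

/- Suppose f x = 0 for some x ≠ x* in D and put v = x - x*. Rolle's theorem applied to
s ↦ vᵀ Y f(x* + s v) on [0, 1] gives a point z of the segment, which lies in D, with
vᵀ Y Df(z) v = 0. Since Y is symmetric, vᵀ A(z) v = 2 vᵀ Y Df(z) v = 0, contradicting the
negative definiteness of A(z). -/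

theorem dotProduct_transpose_mul_add_mul_mulVec {ι R : Type*} [Fintype ι] [CommRing R]
    {Y : Matrix ι ι R} (hY : Y.IsSymm) (J : Matrix ι ι R) (v : ι → R) :
    v ⬝ᵥ (Jᵀ * Y + Y * J) *ᵥ v = 2 * (v ⬝ᵥ Y *ᵥ J *ᵥ v) := by
  have hsymm : v ⬝ᵥ (Jᵀ * Y) *ᵥ v = v ⬝ᵥ Y *ᵥ J *ᵥ v := by
    have hYv : Y *ᵥ v = v ᵥ* Y := by rw [← vecMul_transpose, hY.eq]
    rw [← mulVec_mulVec, dotProduct_mulVec, vecMul_transpose, dotProduct_comm, hYv,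
      ← dotProduct_mulVec]
  rw [add_mulVec, dotProduct_add, hsymm, ← mulVec_mulVec]
  ring

theorem exists_mem_Ioo_apply_hasFDerivAt_eq_zero {E F : Type*} [NormedAddCommGroup E]
    [NormedSpace ℝ E] [NormedAddCommGroup F] [NormedSpace ℝ F] {f : E → F} {f' : E → E →L[ℝ] F}
    (hf : ∀ z, HasFDerivAt f (f' z) z) (ℓ : F →L[ℝ] ℝ) {a b : E} (hab : f a = f b) :
    ∃ c ∈ Ioo (0 : ℝ) 1, ℓ (f' (a + c • (b - a)) (b - a)) = 0 := by
  have hderiv : ∀ s : ℝ, HasDerivAt (fun s => ℓ (f (a + s • (b - a))))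
      (ℓ (f' (a + s • (b - a)) (b - a))) s := fun s => by
    have hline : HasDerivAt (fun s : ℝ => a + s • (b - a)) (b - a) s := by
      simpa using ((hasDerivAt_id s).smul_const (b - a)).const_add a
    exact ℓ.hasFDerivAt.comp_hasDerivAt s ((hf _).comp_hasDerivAt s hline)
  refine exists_hasDerivAt_eq_zero one_pos
    (fun s _ => (hderiv s).continuousAt.continuousWithinAt) ?_ (fun s _ => hderiv s)
  simp [hab]

theorem stmt5_general {n : ℕ} (D : Set (Fin n → ℝ)) (xs : Fin n → ℝ)
    (hstar : ∀ x ∈ D, ∀ s ∈ Set.Icc (0:ℝ) 1, xs + s • (x - xs) ∈ D)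
    (f : (Fin n → ℝ) → (Fin n → ℝ))
    (Df : (Fin n → ℝ) → Matrix (Fin n) (Fin n) ℝ)
    (hf : ∀ z, HasFDerivAt f ((Df z).mulVecLin.toContinuousLinearMap) z)
    (hxs : f xs = 0)
    (Y : Matrix (Fin n) (Fin n) ℝ) (hY : Y.IsSymm)
    (A : (Fin n → ℝ) → Matrix (Fin n) (Fin n) ℝ)
    (hA : ∀ z, A z = (Df z)ᵀ * Y + Y * Df z)
    (hneg : ∀ z ∈ D, ∀ v : Fin n → ℝ, v ≠ 0 → v ⬝ᵥ (A z).mulVec v < 0) :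
    ∀ x ∈ D, f x = 0 → x = xs := by
  intro x hx hfx
  by_contra hne
  let ℓ := (dotProductBilin ℝ ℝ (x - xs) ∘ₗ Y.mulVecLin).toContinuousLinearMap
  obtain ⟨c, hc, hzero⟩ :=
    exists_mem_Ioo_apply_hasFDerivAt_eq_zero hf ℓ (hxs.trans hfx.symm)
  have hzD : xs + c • (x - xs) ∈ D := hstar x hx c (Ioo_subset_Icc_self hc)
  have hlt := hneg _ hzD (x - xs) (sub_ne_zero.mpr hne)
  rw [hA, dotProduct_transpose_mul_add_mul_mulVec hY] at hlt
  have hvanish : (x - xs) ⬝ᵥ Y *ᵥ Df (xs + c • (x - xs)) *ᵥ (x - xs) = 0 := hzero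
  linarith

/-- If `A(z) = Df(z)ᵀ Y + Y Df(z)` is negative definite on a star-shaped set `D`
centered at a zero `x*` of `f`, then `x*` is the unique zero of `f` in `D`. -/
theorem stmt5 {n : ℕ} (D : Set (Fin n → ℝ)) (xs : Fin n → ℝ)
    (hstar : ∀ x ∈ D, ∀ s ∈ Set.Icc (0:ℝ) 1, xs + s • (x - xs) ∈ D)
    (f : (Fin n → ℝ) → (Fin n → ℝ))
    (Df : (Fin n → ℝ) → Matrix (Fin n) (Fin n) ℝ)
    (hf : ∀ z, HasFDerivAt f ((Df z).mulVecLin.toContinuousLinearMap) z)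
    (hDf : Continuous Df) (hxs : f xs = 0)
    (Y : Matrix (Fin n) (Fin n) ℝ) (hY : Y.IsSymm)
    (A : (Fin n → ℝ) → Matrix (Fin n) (Fin n) ℝ)
    (hA : ∀ z, A z = (Df z)ᵀ * Y + Y * Df z)
    (hneg : ∀ z ∈ D, ∀ v : Fin n → ℝ, v ≠ 0 → v ⬝ᵥ (A z).mulVec v < 0) :
    ∀ x ∈ D, f x = 0 → x = xs :=
  stmt5_general D xs hstar f Df hf hxs Y hY A hA hneg
end

section
/- Let Λ = diag(λ₁,…,λₙ) be a complex diagonal matrix with Re(λᵢ) ≠ 0 for all i, X a nonsingular complex n×n matrix, A = X Λ X⁻¹, I* the real diagonal matrix with entries sgn(−Re(λᵢ)), and Ŷ = X^{-H} I* X⁻¹. Then A^H Ŷ + Ŷ A = −2 X^{-H} |Re Λ| X⁻¹, where |Re Λ| = diag(|Re λ₁|,…,|Re λₙ|); in particular A^H Ŷ + Ŷ A is a negative definite Hermitian matrix. -/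
/-!
The Lyapunov operator `Y ↦ AᴴY + YA` is compatible with the change of basis `A ↦ XAX⁻¹`,
`Y ↦ X^{-H}YX⁻¹`, which reduces the identity to the diagonal case: there the `i`-th
entry is `2 sgn(-Re λᵢ) Re λᵢ = -2 |Re λᵢ|`. Definiteness follows
because `|Re Λ|` is positive definite and congruence by the invertible `X⁻¹` preserves this.
-/

open Matrix
open scoped ComplexOrder

namespace Matrix

variable {n R : Type*} [Fintype n]

def lyapunov [CommRing R] [StarRing R] (A Y : Matrix n n R) : Matrix n n R := Aᴴ * Y + Y * A

variable [DecidableEq n]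

theorem lyapunov_diagonal [CommRing R] [StarRing R] (a b : n → R) :
    lyapunov (diagonal a) (diagonal b) = diagonal fun i => star (a i) * b i + b i * a i := by
  simp only [lyapunov, diagonal_conjTranspose, diagonal_mul_diagonal, diagonal_add]
  rfl

theorem lyapunov_conj [CommRing R] [StarRing R] {X : Matrix n n R} (hX : IsUnit X.det)
    (M N : Matrix n n R) :
    lyapunov (X * M * X⁻¹) ((Xᴴ)⁻¹ * N * X⁻¹) = (Xᴴ)⁻¹ * lyapunov M N * X⁻¹ := by
  have hXH : IsUnit Xᴴ.det := by rw [det_conjTranspose]; exact hX.star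
  simp only [lyapunov, conjTranspose_mul, conjTranspose_nonsing_inv, mul_assoc,
    mul_nonsing_inv_cancel_left _ _ hXH, nonsing_inv_mul_cancel_left _ _ hX, ← mul_add, add_mul]

theorem posDef_conjTranspose_inv_mul_mul_inv [Field R] [PartialOrder R] [StarRing R]
    {X D : Matrix n n R} (hX : IsUnit X.det) (hD : D.PosDef) : ((Xᴴ)⁻¹ * D * X⁻¹).PosDef := by
  have hX' : IsUnit X⁻¹ := (isUnit_iff_isUnit_det _).2 (isUnit_nonsing_inv_det X hX)
  rwa [← conjTranspose_nonsing_inv, ← star_eq_conjTranspose,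
    IsUnit.posDef_star_left_conjugate_iff hX']

end Matrix

namespace Matrix.PosDef

variable {n : Type*} {M : Matrix n n ℂ} {c : ℂ}

theorem isHermitian_smul_of_neg (hM : M.PosDef) (hc : c < 0) : (c • M).IsHermitian :=
  hM.isHermitian.smul <| by simpa using (IsSelfAdjoint.of_nonneg (neg_nonneg.2 hc.le)).neg

theorem re_dotProduct_smul_mulVec_neg [Fintype n] (hM : M.PosDef) (hc : c < 0) {z : n → ℂ}
    (hz : z ≠ 0) : (star z ⬝ᵥ (c • M) *ᵥ z).re < 0 := by
  rw [smul_mulVec, dotProduct_smul, smul_eq_mul]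
  exact (Complex.neg_iff.1 (mul_neg_of_neg_of_pos hc (hM.dotProduct_mulVec_pos hz))).1

end Matrix.PosDef

theorem Complex.star_mul_add_mul_eq_neg_two_abs_re (z : ℂ) :
    star z * (if z.re < 0 then 1 else -1) + (if z.re < 0 then 1 else -1) * z
      = -2 * ((|z.re| : ℝ) : ℂ) := by
  split_ifs with h
  · rw [abs_of_neg h]; apply Complex.ext <;> simp; ring
  · rw [abs_of_nonneg (not_lt.1 h)]; apply Complex.ext <;> simp; ring

/-- For `A = X Λ X⁻¹` with `Λ` diagonal, `Re λᵢ ≠ 0`, `I* = diag(sgn(−Re λᵢ))`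
and `Ŷ = X^{-H} I* X⁻¹`, we have `Aᴴ Ŷ + Ŷ A = −2 X^{-H} |Re Λ| X⁻¹`, a
negative definite Hermitian matrix. -/
theorem stmt6 {n : ℕ} (l : Fin n → ℂ) (hl : ∀ i, (l i).re ≠ 0)
    (X : Matrix (Fin n) (Fin n) ℂ) (hX : IsUnit X.det)
    (A Istar Yhat : Matrix (Fin n) (Fin n) ℂ)
    (hA : A = X * Matrix.diagonal l * X⁻¹)
    (hI : Istar = Matrix.diagonal (fun i => if (l i).re < 0 then (1:ℂ) else -1))
    (hY : Yhat = (Xᴴ)⁻¹ * Istar * X⁻¹) :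
    Aᴴ * Yhat + Yhat * A
      = (-2 : ℂ) • ((Xᴴ)⁻¹ * Matrix.diagonal (fun i => ((|(l i).re| : ℝ) : ℂ)) * X⁻¹)
    ∧ (Aᴴ * Yhat + Yhat * A).IsHermitian
    ∧ ∀ z : Fin n → ℂ, z ≠ 0 →
        (star z ⬝ᵥ (Aᴴ * Yhat + Yhat * A).mulVec z).re < 0 := by
  set M := (Xᴴ)⁻¹ * Matrix.diagonal (fun i => ((|(l i).re| : ℝ) : ℂ)) * X⁻¹
  have hM : M.PosDef := posDef_conjTranspose_inv_mul_mul_inv hX <| PosDef.diagonal fun i =>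
    Complex.zero_lt_real.2 (abs_pos.2 (hl i))
  have key : Aᴴ * Yhat + Yhat * A = (-2 : ℂ) • M := by
    change lyapunov A Yhat = _
    simp only [hA, hY, hI, lyapunov_conj hX, lyapunov_diagonal,
      Complex.star_mul_add_mul_eq_neg_two_abs_re, M]
    rw [← smul_mul_assoc, ← mul_smul_comm, ← diagonal_smul]
    rfl
  have hneg : (-2 : ℂ) < 0 := neg_lt_zero.2 two_pos
  rw [key]
  exact ⟨rfl, hM.isHermitian_smul_of_neg hneg, fun z hz => hM.re_dotProduct_smul_mulVec_neg hneg hz⟩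
end

section
/- Let Λ = diag(λ₁,…,λₙ) be a complex diagonal matrix with |λᵢ| ≠ 1 for all i, X a nonsingular complex n×n matrix, A = X Λ X⁻¹, I* the real diagonal matrix with iₖ = 1 if |λₖ| < 1 and iₖ = −1 if |λₖ| > 1, and Ŷ = X^{-H} I* X⁻¹. Then A^H Ŷ A − Ŷ = X^{-H} (|Λ|² − I) I* X⁻¹, where |Λ|² = diag(|λ₁|²,…,|λₙ|²); in particular A^H Ŷ A − Ŷ is a negative definite Hermitian matrix. -/
open Matrix

/-!
Conjugating by `X` reduces everything to the diagonal case: the Stein residual `Aᴴ Ŷ A − Ŷ`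
is the congruence `X^{-H} D X⁻¹` of `D = Λᴴ I* Λ − I* = (|Λ|² − I) I*`. Each diagonal entry
`(|λᵢ|² − 1) iᵢ` is negative because `I*` flips the sign exactly where `|λᵢ|² − 1 > 0`,
and congruence by an invertible matrix preserves (negative) definiteness.
-/

section Congruence

variable {ι R : Type*} [Fintype ι] [DecidableEq ι] [CommRing R] [StarRing R]

theorem conjTranspose_similar_mul_mul_sub (X Λ S : Matrix ι ι R) (hX : IsUnit X.det) :
    (X * Λ * X⁻¹)ᴴ * ((Xᴴ)⁻¹ * S * X⁻¹) * (X * Λ * X⁻¹) - (Xᴴ)⁻¹ * S * X⁻¹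
      = (Xᴴ)⁻¹ * (Λᴴ * S * Λ - S) * X⁻¹ := by
  have hXH : IsUnit Xᴴ.det := by rw [det_conjTranspose]; exact hX.star
  rw [conjTranspose_mul, conjTranspose_mul, conjTranspose_nonsing_inv]
  calc (Xᴴ)⁻¹ * (Λᴴ * Xᴴ) * ((Xᴴ)⁻¹ * S * X⁻¹) * (X * Λ * X⁻¹) - (Xᴴ)⁻¹ * S * X⁻¹
      = (Xᴴ)⁻¹ * (Λᴴ * (Xᴴ * ((Xᴴ)⁻¹ * (S * (X⁻¹ * (X * (Λ * X⁻¹)))))))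
          - (Xᴴ)⁻¹ * S * X⁻¹ := by noncomm_ring
    _ = (Xᴴ)⁻¹ * (Λᴴ * S * Λ - S) * X⁻¹ := by
      rw [mul_nonsing_inv_cancel_left _ _ hXH, nonsing_inv_mul_cancel_left _ _ hX]
      noncomm_ring

theorem diagonal_conjTranspose_mul_mul_sub (l s : ι → R) :
    (diagonal l)ᴴ * diagonal s * diagonal l - diagonal s
      = diagonal fun i => (star (l i) * l i - 1) * s i := by
  rw [diagonal_conjTranspose, diagonal_mul_diagonal, diagonal_mul_diagonal, diagonal_sub]
  congr 1
  funext i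
  simp only [Pi.star_apply]
  ring

end Congruence

section NegDef

open scoped ComplexOrder

variable {ι : Type*} [Fintype ι]

theorem posDef_neg_conjTranspose_inv_mul_diagonal_mul_inv [DecidableEq ι] {X : Matrix ι ι ℂ} {d : ι → ℂ}
    (hX : IsUnit X.det) (hd : ∀ i, d i < 0) : (-((Xᴴ)⁻¹ * diagonal d * X⁻¹)).PosDef := by
  have hinj : Function.Injective X⁻¹.mulVec :=
    mulVec_injective_of_isUnit (isUnit_nonsing_inv_iff.mpr ((isUnit_iff_isUnit_det X).mpr hX))
  rw [← conjTranspose_nonsing_inv, ← Matrix.neg_mul, ← Matrix.mul_neg, diagonal_neg]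
  exact (PosDef.diagonal fun i => neg_pos.mpr (hd i)).conjTranspose_mul_mul_same hinj

theorem isHermitian_and_re_dotProduct_mulVec_neg_of_posDef_neg {M : Matrix ι ι ℂ}
    (hM : (-M).PosDef) : M.IsHermitian ∧ ∀ z : ι → ℂ, z ≠ 0 → (star z ⬝ᵥ M *ᵥ z).re < 0 := by
  refine ⟨by simpa using hM.isHermitian.neg, fun z hz => ?_⟩
  have h := hM.dotProduct_mulVec_pos hz
  rw [neg_mulVec, dotProduct_neg] at h
  simpa using (Complex.pos_iff.mp h).1

theorem sq_sub_one_mul_sign_neg {r : ℝ} (hr : 0 ≤ r) (hr1 : r ≠ 1) :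
    ((r : ℂ) ^ 2 - 1) * (if r < 1 then 1 else -1) < 0 := by
  split_ifs with h
  · have : r ^ 2 < 1 := by nlinarith
    rw [mul_one, sub_neg]
    exact_mod_cast this
  · have : 1 < r ^ 2 := by nlinarith [lt_of_le_of_ne (not_lt.mp h) hr1.symm]
    rw [mul_neg_one, neg_neg_iff_pos, sub_pos]
    exact_mod_cast this

end NegDef

/-- For `A = X Λ X⁻¹` with `Λ` diagonal, `|λᵢ| ≠ 1`, `I* = diag(±1)` according
to `|λᵢ| < 1` or `|λᵢ| > 1`, and `Ŷ = X^{-H} I* X⁻¹`, we have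
`Aᴴ Ŷ A − Ŷ = X^{-H} (|Λ|² − I) I* X⁻¹`, a negative definite Hermitian matrix. -/
theorem stmt7 {n : ℕ} (l : Fin n → ℂ) (hl : ∀ i, ‖l i‖ ≠ 1)
    (X : Matrix (Fin n) (Fin n) ℂ) (hX : IsUnit X.det)
    (A Istar Yhat : Matrix (Fin n) (Fin n) ℂ)
    (hA : A = X * Matrix.diagonal l * X⁻¹)
    (hI : Istar = Matrix.diagonal (fun i => if ‖l i‖ < 1 then (1:ℂ) else -1))
    (hY : Yhat = (Xᴴ)⁻¹ * Istar * X⁻¹) :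
    Aᴴ * Yhat * A - Yhat
      = (Xᴴ)⁻¹ * ((Matrix.diagonal (fun i => ((‖l i‖)^2 : ℂ)) - 1) * Istar) * X⁻¹
    ∧ (Aᴴ * Yhat * A - Yhat).IsHermitian
    ∧ ∀ z : Fin n → ℂ, z ≠ 0 →
        (star z ⬝ᵥ (Aᴴ * Yhat * A - Yhat).mulVec z).re < 0 := by
  set d : Fin n → ℂ := fun i => ((‖l i‖ : ℂ) ^ 2 - 1) * if ‖l i‖ < 1 then 1 else -1
  have hdiag : (Matrix.diagonal l)ᴴ * Istar * Matrix.diagonal l - Istar = diagonal d := by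
    simp only [hI, diagonal_conjTranspose_mul_mul_sub, Complex.star_def, Complex.conj_mul', d]
  have hrhs : (Matrix.diagonal (fun i => ((‖l i‖)^2 : ℂ)) - 1) * Istar = diagonal d := by
    rw [hI, ← diagonal_one, diagonal_sub, diagonal_mul_diagonal]
  have hmain : Aᴴ * Yhat * A - Yhat = (Xᴴ)⁻¹ * diagonal d * X⁻¹ := by
    rw [hA, hY, conjTranspose_similar_mul_mul_sub _ _ _ hX, hdiag]
  have hneg := posDef_neg_conjTranspose_inv_mul_diagonal_mul_inv hX (d := d)
    fun i => sq_sub_one_mul_sign_neg (norm_nonneg _) (hl i)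
  exact ⟨hmain.trans (by rw [hrhs]),
    hmain ▸ isHermitian_and_re_dotProduct_mulVec_neg_of_posDef_neg hneg⟩
end

section
/- Under the hypotheses of the previous statement (B(x) = A_I(x)^T Y A_I(x) − Y negative definite for all x in a star-shaped set D centered at fixed point x* of ψ), x* is the unique fixed point of ψ in D. -/
/-! If `ψ x = x`, the integral form of the mean value theorem along the segment from `x*` to `x`
gives `A_I(x) (x - x*) = ψ x - ψ x* = x - x*`. Hence `A_I(x)ᵀ Y A_I(x)` and `Y` have the same
quadratic form at `v = x - x*`, so `vᵀ B(x) v = 0`, which negative definiteness only allows for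
`v = 0`. -/

open Matrix MeasureTheory

theorem intervalIntegral_fderiv_segment_eq_sub {E F : Type*} [NormedAddCommGroup E]
    [NormedSpace ℝ E] [NormedAddCommGroup F] [NormedSpace ℝ F] [CompleteSpace F]
    {f : E → F} {f' : E → E →L[ℝ] F} (hf : ∀ z, HasFDerivAt f (f' z) z) (x y : E)
    (hint : IntervalIntegrable (fun s : ℝ => f' (x + s • (y - x)) (y - x)) volume 0 1) :
    ∫ s in (0:ℝ)..1, f' (x + s • (y - x)) (y - x) = f y - f x := by
  have hsegment : ∀ s : ℝ, HasDerivAt (fun t : ℝ => x + t • (y - x)) (y - x) s := fun s => by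
    simpa using ((hasDerivAt_id s).smul_const (y - x)).const_add x
  rw [intervalIntegral.integral_eq_sub_of_hasDerivAt
    (fun s _ => (hf _).comp_hasDerivAt s (hsegment s)) hint]
  simp

theorem Matrix.of_intervalIntegral_mulVec {m n : Type*} [Fintype m] [Fintype n] {M : ℝ → Matrix m n ℝ}
    {a b : ℝ} (hM : Continuous M) (v : n → ℝ) :
    (Matrix.of fun i j => ∫ s in a..b, M s i j) *ᵥ v = ∫ s in a..b, M s *ᵥ v := by
  have hMv : IntervalIntegrable (fun s => M s *ᵥ v) volume a b :=
    (hM.matrix_mulVec continuous_const).intervalIntegrable a b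
  funext i
  rw [← ContinuousLinearMap.proj_apply (R := ℝ) i (∫ s in a..b, M s *ᵥ v),
    ← ContinuousLinearMap.intervalIntegral_comp_comm _ hMv]
  simp only [mulVec, dotProduct, of_apply, ContinuousLinearMap.proj_apply]
  rw [intervalIntegral.integral_finsetSum]
  · simp_rw [intervalIntegral.integral_mul_const]
  · exact fun j _ => ((hM.matrix_elem i j).mul continuous_const).intervalIntegrable a b

theorem Matrix.dotProduct_transpose_mul_mul_sub_mulVec_eq_zero {n : Type*} [Fintype n]
    {A Y : Matrix n n ℝ} {v : n → ℝ} (hv : A *ᵥ v = v) :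
    v ⬝ᵥ (Aᵀ * Y * A - Y) *ᵥ v = 0 := by
  rw [sub_mulVec, dotProduct_sub, ← mulVec_mulVec, ← mulVec_mulVec, hv, dotProduct_mulVec,
    vecMul_transpose, hv, sub_self]

theorem stmt10_general {n : ℕ} (D : Set (Fin n → ℝ)) (xs : Fin n → ℝ)
    (ψ : (Fin n → ℝ) → (Fin n → ℝ))
    (Dψ : (Fin n → ℝ) → Matrix (Fin n) (Fin n) ℝ)
    (hψ : ∀ z, HasFDerivAt ψ ((Dψ z).mulVecLin.toContinuousLinearMap) z)
    (hDψ : Continuous Dψ) (hxs : ψ xs = xs)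
    (Y : Matrix (Fin n) (Fin n) ℝ)
    (AI B : (Fin n → ℝ) → Matrix (Fin n) (Fin n) ℝ)
    (hAI : ∀ x, AI x = Matrix.of fun i j =>
      ∫ s in (0:ℝ)..1, Dψ (xs + s • (x - xs)) i j)
    (hB : ∀ x, B x = (AI x)ᵀ * Y * AI x - Y)
    (hneg : ∀ x ∈ D, ∀ v : Fin n → ℝ, v ≠ 0 → v ⬝ᵥ (B x).mulVec v < 0) :
    ∀ x ∈ D, ψ x = x → x = xs := by
  intro x hxD hfix
  by_contra hne
  have hDψ_segment : Continuous fun s : ℝ => Dψ (xs + s • (x - xs)) := by fun_prop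
  have hAI_fixed : AI x *ᵥ (x - xs) = x - xs := by
    have hmvt := intervalIntegral_fderiv_segment_eq_sub hψ xs x
      ((hDψ_segment.matrix_mulVec continuous_const).intervalIntegrable 0 1)
    rw [hfix, hxs] at hmvt
    rw [hAI, of_intervalIntegral_mulVec hDψ_segment]
    exact hmvt
  have hB_zero : (x - xs) ⬝ᵥ B x *ᵥ (x - xs) = 0 :=
    hB x ▸ dotProduct_transpose_mul_mul_sub_mulVec_eq_zero hAI_fixed
  exact (hneg x hxD _ (sub_ne_zero.mpr hne)).ne hB_zero

/-- If `B(x) = A_I(x)ᵀ Y A_I(x) − Y` is negative definite on a star-shaped set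
`D` centered at a fixed point `x*` of `ψ`, then `x*` is the unique fixed point
of `ψ` in `D`. -/
theorem stmt10 {n : ℕ} (D : Set (Fin n → ℝ)) (xs : Fin n → ℝ)
    (hstar : ∀ x ∈ D, ∀ s ∈ Set.Icc (0:ℝ) 1, xs + s • (x - xs) ∈ D)
    (ψ : (Fin n → ℝ) → (Fin n → ℝ))
    (Dψ : (Fin n → ℝ) → Matrix (Fin n) (Fin n) ℝ)
    (hψ : ∀ z, HasFDerivAt ψ ((Dψ z).mulVecLin.toContinuousLinearMap) z)
    (hDψ : Continuous Dψ) (hxs : ψ xs = xs)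
    (Y : Matrix (Fin n) (Fin n) ℝ) (hY : Y.IsSymm)
    (AI B : (Fin n → ℝ) → Matrix (Fin n) (Fin n) ℝ)
    (hAI : ∀ x, AI x = Matrix.of fun i j =>
      ∫ s in (0:ℝ)..1, Dψ (xs + s • (x - xs)) i j)
    (hB : ∀ x, B x = (AI x)ᵀ * Y * AI x - Y)
    (hneg : ∀ x ∈ D, ∀ v : Fin n → ℝ, v ≠ 0 → v ⬝ᵥ (B x).mulVec v < 0) :
    ∀ x ∈ D, ψ x = x → x = xs :=
  stmt10_general D xs ψ Dψ hψ hDψ hxs Y AI B hAI hB hneg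
end

section
/- Let A be a real n×n matrix, Λ = diag(λ₁,…,λₙ) a complex diagonal matrix with Re(λᵢ) ≠ 0 for all i, write A = Λ + V, and let I* = diag(sgn(−Re λ₁),…,sgn(−Re λₙ)). If |Re(λᵢ)| > Σⱼ |V_{ij}| and |Re(λᵢ)| > Σⱼ |V_{ji}| for all i, then the Hermitian matrix A^H I* + I* A is negative definite. -/
/-!
With `D = I*` the matrix is `(D A)ᴴ + D A`, and `D A = diag(I*ᵢ λᵢ) + D V` where
`Re(I*ᵢ λᵢ) = -|Re λᵢ|` and `D V` has the entry norms of `V`. Hence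
`Re zᴴ (Aᴴ D + D A) z = 2 Re zᴴ (D A) z ≤ -2 ∑ |Re λᵢ| |zᵢ|² + 2 |zᴴ (D V) z|`, and
`2 |zᵢ| |zⱼ| ≤ |zᵢ|² + |zⱼ|²` bounds `2 |zᴴ B z|` by `∑ |zᵢ|² (row sumᵢ + column sumᵢ)` of `|B|`.
Strict dominance of both sums by `|Re λᵢ|` makes every coefficient of `|zᵢ|²` negative.
-/

open Matrix

theorem sum_sum_mul_mul_le_sum_sq_mul {ι : Type*} [Fintype ι] (a : ι → ι → ℝ) (ha : ∀ i j, 0 ≤ a i j) (x : ι → ℝ) :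
    ∑ i, ∑ j, a i j * (x i * x j) ≤ ∑ i, x i ^ 2 * ((∑ j, a i j) + ∑ j, a j i) / 2 := by
  calc ∑ i, ∑ j, a i j * (x i * x j)
      ≤ ∑ i, ∑ j, a i j * x i ^ 2 / 2 + ∑ i, ∑ j, a j i * x i ^ 2 / 2 := by
        rw [Finset.sum_comm (f := fun i j => a j i * x i ^ 2 / 2), ← Finset.sum_add_distrib]
        gcongr with i _
        rw [← Finset.sum_add_distrib]
        gcongr with j _
        nlinarith [mul_nonneg (ha i j) (sq_nonneg (x i - x j))]
    _ = ∑ i, x i ^ 2 * ((∑ j, a i j) + ∑ j, a j i) / 2 := by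
        simp only [← Finset.sum_add_distrib, Finset.mul_sum, mul_add, Finset.sum_div]
        refine Finset.sum_congr rfl fun i _ => Finset.sum_congr rfl fun j _ => ?_
        ring

namespace Matrix

variable {ι 𝕜 : Type*} [Fintype ι] [RCLike 𝕜]

theorem norm_star_dotProduct_mulVec_le (B : Matrix ι ι 𝕜) (z : ι → 𝕜) :
    ‖star z ⬝ᵥ B *ᵥ z‖ ≤ ∑ i, ‖z i‖ ^ 2 * ((∑ j, ‖B i j‖) + ∑ j, ‖B j i‖) / 2 := by
  calc ‖star z ⬝ᵥ B *ᵥ z‖ = ‖∑ i, ∑ j, star (z i) * (B i j * z j)‖ := by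
        simp only [dotProduct, mulVec, Finset.mul_sum, Pi.star_apply]
    _ ≤ ∑ i, ∑ j, ‖B i j‖ * (‖z i‖ * ‖z j‖) := by
        refine (norm_sum_le _ _).trans (Finset.sum_le_sum fun i _ => ?_)
        refine (norm_sum_le _ _).trans (Finset.sum_le_sum fun j _ => ?_)
        simp only [norm_mul, norm_star]
        exact le_of_eq (by ring)
    _ ≤ _ := sum_sum_mul_mul_le_sum_sq_mul _ (fun i j => norm_nonneg _) _

theorem re_star_dotProduct_conjTranspose_add_mulVec (B : Matrix ι ι 𝕜) (z : ι → 𝕜) :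
    RCLike.re (star z ⬝ᵥ (Bᴴ + B) *ᵥ z) = 2 * RCLike.re (star z ⬝ᵥ B *ᵥ z) := by
  have : star z ⬝ᵥ Bᴴ *ᵥ z = star (star z ⬝ᵥ B *ᵥ z) := by
    rw [dotProduct_mulVec, ← star_mulVec, star_dotProduct]
  rw [add_mulVec, dotProduct_add, map_add, this, RCLike.star_def, RCLike.conj_re]
  ring

theorem re_star_dotProduct_diagonal_mulVec [DecidableEq ι] (d z : ι → 𝕜) :
    RCLike.re (star z ⬝ᵥ diagonal d *ᵥ z) = ∑ i, ‖z i‖ ^ 2 * RCLike.re (d i) := by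
  simp only [mulVec_diagonal, dotProduct, Pi.star_apply, map_sum]
  refine Finset.sum_congr rfl fun i _ => ?_
  rw [mul_left_comm, RCLike.star_def, RCLike.conj_mul, ← RCLike.ofReal_pow, RCLike.re_mul_ofReal,
    mul_comm]

theorem re_star_dotProduct_mulVec_neg_of_dominant [DecidableEq ι] (d : ι → 𝕜)
    (C : Matrix ι ι 𝕜) (hdom : ∀ i, 2 * RCLike.re (d i) + (∑ j, ‖C i j‖) + ∑ j, ‖C j i‖ < 0)
    {z : ι → 𝕜} (hz : z ≠ 0) :
    RCLike.re (star z ⬝ᵥ ((diagonal d + C)ᴴ + (diagonal d + C)) *ᵥ z) < 0 := by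
  obtain ⟨k, hk⟩ := Function.ne_iff.mp hz
  rw [re_star_dotProduct_conjTranspose_add_mulVec, add_mulVec, dotProduct_add, map_add,
    re_star_dotProduct_diagonal_mulVec]
  calc 2 * (∑ i, ‖z i‖ ^ 2 * RCLike.re (d i) + RCLike.re (star z ⬝ᵥ C *ᵥ z))
      ≤ 2 * (∑ i, ‖z i‖ ^ 2 * RCLike.re (d i)
          + ∑ i, ‖z i‖ ^ 2 * ((∑ j, ‖C i j‖) + ∑ j, ‖C j i‖) / 2) := by
        gcongr
        exact (RCLike.re_le_norm _).trans (norm_star_dotProduct_mulVec_le C z)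
    _ = ∑ i, ‖z i‖ ^ 2 * (2 * RCLike.re (d i) + (∑ j, ‖C i j‖) + ∑ j, ‖C j i‖) := by
        rw [← Finset.sum_add_distrib, Finset.mul_sum]
        exact Finset.sum_congr rfl fun i _ => by ring
    _ < 0 := Finset.sum_neg' (fun i _ => mul_nonpos_of_nonneg_of_nonpos (sq_nonneg _) (hdom i).le)
        ⟨k, Finset.mem_univ k, mul_neg_of_pos_of_neg (by positivity) (hdom k)⟩

end Matrix

theorem stmt16_general {n : ℕ} (A : Matrix (Fin n) (Fin n) ℂ)
    (l : Fin n → ℂ)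
    (V Istar : Matrix (Fin n) (Fin n) ℂ)
    (hV : V = A - Matrix.diagonal l)
    (hI : Istar = Matrix.diagonal (fun i => if (l i).re < 0 then (1:ℂ) else -1))
    (hrow : ∀ i, ∑ j, ‖V i j‖ < |(l i).re|)
    (hcol : ∀ i, ∑ j, ‖V j i‖ < |(l i).re|) :
    (Aᴴ * Istar + Istar * A).IsHermitian
    ∧ ∀ z : Fin n → ℂ, z ≠ 0 →
        (star z ⬝ᵥ (Aᴴ * Istar + Istar * A).mulVec z).re < 0 := by
  set e : Fin n → ℂ := fun i => if (l i).re < 0 then 1 else -1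
  have he_star : star e = e := funext fun i => by
    simp only [Pi.star_apply, e]
    split_ifs <;> simp
  have he_norm (i : Fin n) : ‖e i‖ = 1 := by
    simp only [e]
    split_ifs <;> simp
  have he_re (i : Fin n) : (e i * l i).re = -|(l i).re| := by
    simp only [e]
    split_ifs with h
    · simp [abs_of_neg h]
    · simp [abs_of_nonneg (not_lt.mp h)]
  have hIA : Istar * A = diagonal (e * l) + Istar * V := by
    rw [hV, mul_sub, hI, diagonal_mul_diagonal]
    exact (add_sub_cancel _ _).symm
  have hAI : Aᴴ * Istar = (Istar * A)ᴴ := by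
    rw [conjTranspose_mul, hI, diagonal_conjTranspose, he_star]
  have hIV (i j : Fin n) : ‖(Istar * V) i j‖ = ‖V i j‖ := by
    rw [hI, diagonal_mul, norm_mul, he_norm, one_mul]
  rw [hAI, hIA]
  refine ⟨isHermitian_transpose_add_self _, fun z hz =>
    re_star_dotProduct_mulVec_neg_of_dominant _ _ (fun i => ?_) hz⟩
  simp only [hIV, Pi.mul_apply, RCLike.re_to_complex, he_re]
  linarith [hrow i, hcol i]

/-- Let `A` be a real matrix (viewed over `ℂ`), `A = Λ + V` with
`Λ = diag(λᵢ)`, `Re λᵢ ≠ 0`, and `I* = diag(sgn(−Re λᵢ))`. If the row and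
column sums of `|V|` are strictly dominated by `|Re λᵢ|`, then the Hermitian
matrix `Aᴴ I* + I* A` is negative definite. -/
theorem stmt16 {n : ℕ} (A : Matrix (Fin n) (Fin n) ℂ)
    (hAreal : ∀ i j, (A i j).im = 0)
    (l : Fin n → ℂ) (hl : ∀ i, (l i).re ≠ 0)
    (V Istar : Matrix (Fin n) (Fin n) ℂ)
    (hV : V = A - Matrix.diagonal l)
    (hI : Istar = Matrix.diagonal (fun i => if (l i).re < 0 then (1:ℂ) else -1))
    (hrow : ∀ i, ∑ j, ‖V i j‖ < |(l i).re|)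
    (hcol : ∀ i, ∑ j, ‖V j i‖ < |(l i).re|) :
    (Aᴴ * Istar + Istar * A).IsHermitian
    ∧ ∀ z : Fin n → ℂ, z ≠ 0 →
        (star z ⬝ᵥ (Aᴴ * Istar + Istar * A).mulVec z).re < 0 :=
  stmt16_general A l V Istar hV hI hrow hcol
end

section
/- Let f : ℝ^n → ℝ^n be C¹ with f(x*) = 0 and Y real symmetric. Suppose the matrix A(z) = Df(z)^T Y + Y Df(z) is negative definite at z = x*. Then there exists ε > 0 such that for all x with 0 < ‖x − x*‖ < ε, the quantity f(x)^T Y (x − x*) + (x − x*)^T Y f(x) is strictly negative. -/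
/-!
Since `f x* = 0`, we have `f x = Df(x*) (x - x*) + o(‖x - x*‖)`, so the quantity
`f(x)ᵀ Y (x - x*) + (x - x*)ᵀ Y f(x)` is the quadratic form of `A(x*)` at `x - x*` up to an error
`o(‖x - x*‖²)`. By compactness of the unit sphere, negative definiteness gives
`vᵀ A(x*) v ≤ -c ‖v‖²` for some `c > 0`, and this dominates the error near `x*`.
-/

open Matrix Filter Topology Asymptotics Metric

section

variable {E : Type*} [NormedAddCommGroup E] [NormedSpace ℝ E]

theorem ContinuousLinearMap.exists_pos_mul_sq_norm_le_apply_self [FiniteDimensional ℝ E]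
    (B : E →L[ℝ] E →L[ℝ] ℝ) (hB : ∀ v, v ≠ 0 → 0 < B v v) :
    ∃ c > 0, ∀ v, c * ‖v‖ ^ 2 ≤ B v v := by
  obtain ⟨c, hc, hcB⟩ := (isCompact_sphere (0 : E) 1).exists_forall_le'
    (B.continuous₂.comp (continuous_id.prodMk continuous_id)).continuousOn
    fun u hu => hB u (ne_zero_of_mem_unit_sphere ⟨u, hu⟩)
  refine ⟨c, hc, fun v => ?_⟩
  rcases eq_or_ne v 0 with rfl | hv
  · simp
  have hnv : ‖v‖ ≠ 0 := norm_ne_zero_iff.mpr hv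
  have hu : ‖v‖⁻¹ • v ∈ sphere (0 : E) 1 := by
    simp [norm_smul, inv_mul_cancel₀ hnv]
  calc c * ‖v‖ ^ 2 ≤ B (‖v‖⁻¹ • v) (‖v‖⁻¹ • v) * ‖v‖ ^ 2 := by gcongr; exact hcB _ hu
    _ = B v v := by
      simp only [map_smul, _root_.smul_apply, smul_eq_mul]
      field_simp

theorem Asymptotics.IsLittleO.apply₂_add_apply₂_swap {α : Type*} {l : Filter α}
    (B : E →L[ℝ] E →L[ℝ] ℝ) {r v : α → E} (hr : r =o[l] v) :
    (fun x => B (r x) (v x) + B (v x) (r x)) =o[l] fun x => ‖v x‖ ^ 2 := by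
  have hrv : (fun x => ‖r x‖ * ‖v x‖) =o[l] fun x => ‖v x‖ ^ 2 := by
    simpa only [sq] using hr.norm_norm.mul_isBigO (isBigO_refl _ _)
  have hvr : (fun x => ‖v x‖ * ‖r x‖) =o[l] fun x => ‖v x‖ ^ 2 := by
    simpa only [sq] using (isBigO_refl _ _).mul_isLittleO hr.norm_norm
  exact (B.isBoundedBilinearMap.isBigO_comp.trans_isLittleO hrv).add
    (B.isBoundedBilinearMap.isBigO_comp.trans_isLittleO hvr)

theorem HasFDerivAt.eventually_apply₂_add_apply₂_swap_neg [FiniteDimensional ℝ E]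
    (B : E →L[ℝ] E →L[ℝ] ℝ) {f : E → E} {f' : E →L[ℝ] E} {x₀ : E}
    (hf : HasFDerivAt f f' x₀) (hx₀ : f x₀ = 0)
    (hneg : ∀ v, v ≠ 0 → B (f' v) v + B v (f' v) < 0) :
    ∀ᶠ x in 𝓝[≠] x₀, B (f x) (x - x₀) + B (x - x₀) (f x) < 0 := by
  obtain ⟨c, hc, hcQ⟩ := (-(B.comp f' + B.flip.comp f')).exists_pos_mul_sq_norm_le_apply_self
    fun v hv => neg_pos.mpr (hneg v hv)
  have hr : (fun x => f x - f' (x - x₀)) =o[𝓝 x₀] fun x => x - x₀ := by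
    simpa [hx₀] using hf.isLittleO
  have herr := (hr.apply₂_add_apply₂_swap B).bound (half_pos hc)
  filter_upwards [nhdsWithin_le_nhds herr, self_mem_nhdsWithin] with x hx hne
  have hpos : 0 < ‖x - x₀‖ := norm_pos_iff.mpr (sub_ne_zero.mpr hne)
  have hsplit : B (f x) (x - x₀) + B (x - x₀) (f x)
      = (B (f' (x - x₀)) (x - x₀) + B (x - x₀) (f' (x - x₀)))
        + (B (f x - f' (x - x₀)) (x - x₀) + B (x - x₀) (f x - f' (x - x₀))) := by
    simp only [map_sub, _root_.sub_apply]; ring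
  have hQ := hcQ (x - x₀)
  simp only [_root_.neg_apply, _root_.add_apply, ContinuousLinearMap.coe_comp,
    Function.comp_apply, ContinuousLinearMap.flip_apply] at hQ
  rw [Real.norm_eq_abs, norm_pow, norm_norm] at hx
  rw [hsplit]
  linarith [le_of_abs_le hx, mul_pos hc (pow_pos hpos 2)]

end

theorem Matrix.mulVec_dotProduct_mulVec_add_dotProduct_mulVec_mulVec {ι R : Type*} [Fintype ι]
    [CommSemiring R] (M Y : Matrix ι ι R) (v : ι → R) :
    M *ᵥ v ⬝ᵥ Y *ᵥ v + v ⬝ᵥ Y *ᵥ (M *ᵥ v) = v ⬝ᵥ (Mᵀ * Y + Y * M) *ᵥ v := by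
  rw [add_mulVec, dotProduct_add, ← mulVec_mulVec, ← mulVec_mulVec, dotProduct_mulVec v Mᵀ,
    vecMul_transpose]

theorem stmt19_general {n : ℕ} (f : (Fin n → ℝ) → (Fin n → ℝ))
    (Df : (Fin n → ℝ) → Matrix (Fin n) (Fin n) ℝ)
    (hf : ∀ z, HasFDerivAt f ((Df z).mulVecLin.toContinuousLinearMap) z)
    (xs : Fin n → ℝ) (hxs : f xs = 0)
    (Y : Matrix (Fin n) (Fin n) ℝ)
    (hneg : ∀ v : Fin n → ℝ, v ≠ 0 →
      v ⬝ᵥ ((Df xs)ᵀ * Y + Y * Df xs).mulVec v < 0) :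
    ∃ ε > (0:ℝ), ∀ x : Fin n → ℝ, 0 < ‖x - xs‖ → ‖x - xs‖ < ε →
      f x ⬝ᵥ Y.mulVec (x - xs) + (x - xs) ⬝ᵥ Y.mulVec (f x) < 0 := by
  have h := (hf xs).eventually_apply₂_add_apply₂_swap_neg
    (Matrix.toLinearMap₂' ℝ Y).toContinuousBilinearMap hxs fun v hv => by
      simpa only [LinearMap.toContinuousBilinearMap_apply, Matrix.toLinearMap₂'_apply',
        LinearMap.coe_toContinuousLinearMap', mulVecLin_apply,
        mulVec_dotProduct_mulVec_add_dotProduct_mulVec_mulVec]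
        using hneg v hv
  obtain ⟨ε, hε, hball⟩ := Metric.mem_nhdsWithin_iff.mp h
  refine ⟨ε, hε, fun x hx0 hxε => ?_⟩
  simpa only [Set.mem_ofPred_eq, LinearMap.toContinuousBilinearMap_apply,
    Matrix.toLinearMap₂'_apply'] using
    hball ⟨mem_ball_iff_norm.mpr hxε, sub_ne_zero.mp (norm_pos_iff.mp hx0)⟩

/-- If `A(x*) = Df(x*)ᵀ Y + Y Df(x*)` is negative definite, then there is
`ε > 0` such that `f(x)ᵀ Y (x − x*) + (x − x*)ᵀ Y f(x) < 0` whenever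
`0 < ‖x − x*‖ < ε`. -/
theorem stmt19 {n : ℕ} (f : (Fin n → ℝ) → (Fin n → ℝ))
    (Df : (Fin n → ℝ) → Matrix (Fin n) (Fin n) ℝ)
    (hf : ∀ z, HasFDerivAt f ((Df z).mulVecLin.toContinuousLinearMap) z)
    (hDf : Continuous Df)
    (xs : Fin n → ℝ) (hxs : f xs = 0)
    (Y : Matrix (Fin n) (Fin n) ℝ) (hY : Y.IsSymm)
    (hneg : ∀ v : Fin n → ℝ, v ≠ 0 →
      v ⬝ᵥ ((Df xs)ᵀ * Y + Y * Df xs).mulVec v < 0) :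
    ∃ ε > (0:ℝ), ∀ x : Fin n → ℝ, 0 < ‖x - xs‖ → ‖x - xs‖ < ε →
      f x ⬝ᵥ Y.mulVec (x - xs) + (x - xs) ⬝ᵥ Y.mulVec (f x) < 0 :=
  stmt19_general f Df hf xs hxs Y hneg
end
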